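/- arXiv:1610.01637 — 4 statements merged into one kernel-verified Lean document; each statement's English description precedes it below -/
import Mathlib

section
/- Let m ≥ 1 and define A_m = m·C(2m, m) and B_m = 2m·∑_{ℓ=0}^{m-1} (2m - 2ℓ - 1)·C(m-1, ℓ)·C(m, ℓ). Then B_m = ((2m² - 2m + 1)/(2m - 1))·A_m. -/
/-!
Writing `m = n + 1`, the absorption identity `(n + 1 - ℓ) C(n + 1, ℓ) = (n + 1) C(n, ℓ)` splits the
weighted sum into `2 (n + 1) ∑ C(n, ℓ)² - ∑ C(n, ℓ) C(n + 1, ℓ)`, and Vandermonde evaluates the two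
sums as `C(2n, n)` and `C(2n + 1, n)`. Both `A_m` and `B_m` are then rational multiples of `C(2n, n)`:
`A_m = 2 (2m - 1) C(2n, n)` and `B_m = 2 (2m² - 2m + 1) C(2n, n)`.
-/

open Finset

namespace Nat

theorem sum_range_choose_mul_choose_succ (n : ℕ) :
    ∑ i ∈ range (n + 1), n.choose i * (n + 1).choose i = (2 * n + 1).choose n := by
  rw [show 2 * n + 1 = (n + 1) + n by ring, add_choose_eq,
    Nat.sum_antidiagonal_eq_sum_range_succ_mk]
  refine sum_congr rfl fun i hi => ?_
  rw [choose_symm (mem_range_succ_iff.mp hi), mul_comm]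

theorem succ_mul_choose_two_mul_add_one (n : ℕ) :
    (n + 1) * (2 * n + 1).choose n = (2 * n + 1) * (2 * n).choose n := by
  have h := choose_mul_succ_eq (2 * n) n
  rw [show 2 * n + 1 - n = n + 1 by omega] at h
  linarith

end Nat

theorem sum_range_weighted_choose_mul_choose_succ {R : Type*} [CommRing R] (n : ℕ) :
    ∑ ℓ ∈ range (n + 1), (2 * ((n : R) + 1) - 2 * ℓ - 1) * n.choose ℓ * (n + 1).choose ℓ
      = 2 * ((n : R) + 1) * (2 * n).choose n - (2 * n + 1).choose n := by
  have hsq : ∑ ℓ ∈ range (n + 1), (n.choose ℓ : R) ^ 2 = (2 * n).choose n := by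
    exact_mod_cast congrArg (Nat.cast (R := R)) (Nat.sum_range_choose_sq n)
  have hmix : ∑ ℓ ∈ range (n + 1), (n.choose ℓ : R) * (n + 1).choose ℓ = (2 * n + 1).choose n := by
    exact_mod_cast congrArg (Nat.cast (R := R)) (Nat.sum_range_choose_mul_choose_succ n)
  rw [← hsq, ← hmix, mul_sum, ← sum_sub_distrib]
  refine sum_congr rfl fun ℓ hℓ => ?_
  have hle : ℓ ≤ n + 1 := (mem_range.mp hℓ).le
  have absorb : (n.choose ℓ : R) * ((n : R) + 1) = (n + 1).choose ℓ * ((n : R) + 1 - ℓ) := by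
    have h := congrArg (Nat.cast : ℕ → R) (Nat.choose_mul_succ_eq n ℓ)
    push_cast [Nat.cast_sub hle] at h
    exact h
  linear_combination (-2 * (n.choose ℓ : R)) * absorb

theorem stmt_2 (m : ℕ) (hm : 1 ≤ m)
    (A B : ℝ)
    (hA : A = (m : ℝ) * Nat.choose (2 * m) m)
    (hB : B = 2 * (m : ℝ) *
      ∑ ℓ ∈ Finset.range m, (2 * (m : ℝ) - 2 * ℓ - 1) * Nat.choose (m - 1) ℓ * Nat.choose m ℓ) :
    B = ((2 * (m : ℝ) ^ 2 - 2 * m + 1) / (2 * m - 1)) * A := by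
  obtain ⟨n, rfl⟩ : ∃ n, m = n + 1 := ⟨m - 1, by omega⟩
  have hmix : ((n : ℝ) + 1) * (2 * n + 1).choose n = (2 * n + 1) * (2 * n).choose n := by
    exact_mod_cast Nat.succ_mul_choose_two_mul_add_one n
  have hcentral :
      ((n : ℝ) + 1) * (2 * (n + 1)).choose (n + 1) = 2 * (2 * n + 1) * (2 * n).choose n := by
    exact_mod_cast Nat.succ_mul_centralBinom_succ n
  subst hA hB
  simp only [Nat.add_sub_cancel]
  push_cast
  have hden : 2 * ((n : ℝ) + 1) - 1 ≠ 0 := by linarith [n.cast_nonneg (α := ℝ)]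
  rw [sum_range_weighted_choose_mul_choose_succ, div_mul_eq_mul_div, eq_div_iff hden]
  linear_combination (-2 * (2 * (n : ℝ) + 1)) * hmix - (2 * (n : ℝ) ^ 2 + 2 * n + 1) * hcentral
end

section
/- Let a_i and b_i (for i = 0, 1, ..., m+1) be nonnegative real sequences satisfying ∑_{i=0}^{k} a_i ≤ c·a_{k+1} + ∑_{i=0}^{k} b_i for a constant c > 0 and all k ≤ m. Then a_0 ≤ c·(c/(c+1))^k · a_{k+1} + ∑_{i=0}^{k} (c/(c+1))^i · b_i for all k ≤ m. -/
/-!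
With `r = c / (c + 1)`, the potential `Q k = r ^ k * ∑_{i ≤ k} (a i - b i) + ∑_{i ≤ k} r ^ i * b i`
starts at `Q 0 = a 0`, and `Q (k + 1) - Q k = r ^ k / (c + 1) * (c * a (k + 1) - ∑_{i ≤ k} (a i - b i))`,
which the hypothesis makes nonnegative; so `a 0 ≤ Q k`, and the hypothesis once more bounds
`Q k` by the right-hand side.
-/

open Finset

namespace DiscreteGronwall

variable (c : ℝ) (a b : ℕ → ℝ)

noncomputable def potential (k : ℕ) : ℝ :=
  (c / (c + 1)) ^ k * ∑ i ∈ range (k + 1), (a i - b i)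
    + ∑ i ∈ range (k + 1), (c / (c + 1)) ^ i * b i

theorem potential_zero : potential c a b 0 = a 0 := by
  simp [potential]

theorem potential_succ_sub {c : ℝ} (hc : c + 1 ≠ 0) (k : ℕ) :
    potential c a b (k + 1) - potential c a b k
      = (c / (c + 1)) ^ k / (c + 1) * (c * a (k + 1) - ∑ i ∈ range (k + 1), (a i - b i)) := by
  simp only [potential, sum_range_succ _ (k + 1), pow_succ]
  field_simp
  ring

variable {c a b}

theorem potential_le_potential_succ (hc : 0 ≤ c) {k : ℕ}
    (h : ∑ i ∈ range (k + 1), (a i - b i) ≤ c * a (k + 1)) :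
    potential c a b k ≤ potential c a b (k + 1) := by
  have hstep := potential_succ_sub a b (by linarith : c + 1 ≠ 0) k
  have : 0 ≤ (c / (c + 1)) ^ k / (c + 1) * (c * a (k + 1) - ∑ i ∈ range (k + 1), (a i - b i)) :=
    mul_nonneg (by positivity) (sub_nonneg.mpr h)
  linarith

theorem potential_le (hc : 0 ≤ c) {k : ℕ}
    (h : ∑ i ∈ range (k + 1), (a i - b i) ≤ c * a (k + 1)) :
    potential c a b k
      ≤ c * (c / (c + 1)) ^ k * a (k + 1) + ∑ i ∈ range (k + 1), (c / (c + 1)) ^ i * b i := by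
  have := mul_le_mul_of_nonneg_left h (by positivity : 0 ≤ (c / (c + 1)) ^ k)
  simp only [potential]
  linarith

theorem potential_zero_le (hc : 0 ≤ c) {m : ℕ}
    (h : ∀ k ≤ m, ∑ i ∈ range (k + 1), (a i - b i) ≤ c * a (k + 1)) :
    ∀ k ≤ m + 1, potential c a b 0 ≤ potential c a b k := by
  intro k hk
  induction k with
  | zero => exact le_rfl
  | succ k ih =>
    exact (ih (by omega)).trans (potential_le_potential_succ hc (h k (by omega)))

end DiscreteGronwall

theorem stmt_3_general (m : ℕ) (c : ℝ) (hc : 0 < c) (a b : ℕ → ℝ)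
    (hrec : ∀ k ≤ m, ∑ i ∈ Finset.range (k + 1), a i
        ≤ c * a (k + 1) + ∑ i ∈ Finset.range (k + 1), b i) :
    ∀ k ≤ m, a 0 ≤ c * (c / (c + 1)) ^ k * a (k + 1)
        + ∑ i ∈ Finset.range (k + 1), (c / (c + 1)) ^ i * b i := by
  have h : ∀ k ≤ m, ∑ i ∈ range (k + 1), (a i - b i) ≤ c * a (k + 1) := fun k hk => by
    rw [sum_sub_distrib]
    linarith [hrec k hk]
  intro k hk
  calc a 0 = DiscreteGronwall.potential c a b 0 := (DiscreteGronwall.potential_zero c a b).symm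
    _ ≤ DiscreteGronwall.potential c a b k := DiscreteGronwall.potential_zero_le hc.le h k (by omega)
    _ ≤ _ := DiscreteGronwall.potential_le hc.le (h k hk)

theorem stmt_3 (m : ℕ) (c : ℝ) (hc : 0 < c) (a b : ℕ → ℝ)
    (ha : ∀ i, 0 ≤ a i) (hb : ∀ i, 0 ≤ b i)
    (hrec : ∀ k ≤ m, ∑ i ∈ Finset.range (k + 1), a i
        ≤ c * a (k + 1) + ∑ i ∈ Finset.range (k + 1), b i) :
    ∀ k ≤ m, a 0 ≤ c * (c / (c + 1)) ^ k * a (k + 1)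
        + ∑ i ∈ Finset.range (k + 1), (c / (c + 1)) ^ i * b i :=
  stmt_3_general m c hc a b hrec
end

section
/- Let L ≥ 2 and let b_0, ..., b_L be nonnegative real numbers with b_0 = b_L = 0 satisfying b_k ≤ 1 + (1/4)(b_{k-1} + b_{k+1}) for all 1 ≤ k ≤ L - 1. Then b_k ≤ 4 for all k (in particular, max_k b_k is bounded by a constant independent of L). -/
theorem stmt_4 (L : ℕ) (hL : 2 ≤ L) (b : ℕ → ℝ)
    (hnonneg : ∀ k ≤ L, 0 ≤ b k)
    (h0 : b 0 = 0) (hLend : b L = 0)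
    (hrec : ∀ k, 1 ≤ k → k ≤ L - 1 → b k ≤ 1 + (1 / 4) * (b (k - 1) + b (k + 1))) :
    ∀ k ≤ L, b k ≤ 4 := by
  obtain ⟨m, hm, hmax⟩ := Finset.exists_max_image (Finset.range (L + 1)) b ⟨0, by simp⟩
  simp only [Finset.mem_range, Nat.lt_succ_iff] at hm hmax
  have key : b m ≤ 4 := by
    rcases eq_or_ne m 0 with rfl | hm0
    · rw [h0]; norm_num
    rcases eq_or_ne m L with rfl | hmL
    · rw [hLend]; norm_num
    have h1 : 1 ≤ m := Nat.one_le_iff_ne_zero.mpr hm0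
    have h2 : m ≤ L - 1 := by omega
    have hb1 : b (m - 1) ≤ b m := hmax _ (by omega)
    have hb2 : b (m + 1) ≤ b m := hmax _ (by omega)
    have := hrec m h1 h2
    linarith
  intro k hk
  exact le_trans (hmax k hk) key
end

section
/- For every ε with 0 < ε < min(1/4, (a+1)/2), and with K_ε(s,t) = (θ(s)·θ(t))^{-ε}/(φ(s)·φ(t))^{1/2} · (θ(s)/θ(t))^{a/2 + 1/4}, where a > -1, φ(t) is comparable to √t and θ(t) is comparable to t near 0 (and both bounded above and below on [δ,1] for δ > 0), one has ∫_0^1 ∫_0^t K_ε(s,t)² ds dt < ∞. -/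
/-! Within a factor `c`, `θ` behaves like `t` and `φ` like `√t`, so each power in `K_ε²` may be
replaced by the same power of the model function at the cost of a constant. This gives
`K_ε(s,t)² ≤ C s^(a-2ε) t^(-(a+1)-2ε)`. Integrating in `s ∈ (0,t]` converges because
`a - 2ε > -1` and leaves `t^(-4ε)`, which is integrable on `(0,1]` because `ε < 1/4`. -/

open MeasureTheory Real Set

def IsComparable (c x y : ℝ) : Prop := c⁻¹ * y ≤ x ∧ x ≤ c * y

namespace IsComparable

variable {c d x y x' y' : ℝ}

lemma nonneg (h : IsComparable c x y) (hc : 0 < c) (hy : 0 ≤ y) : 0 ≤ x :=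
  (by positivity : 0 ≤ c⁻¹ * y).trans h.1

lemma pos (h : IsComparable c x y) (hc : 0 < c) (hy : 0 < y) : 0 < x :=
  (by positivity : 0 < c⁻¹ * y).trans_le h.1

lemma mul (h : IsComparable c x y) (h' : IsComparable d x' y') (hc : 0 < c) (hd : 0 < d)
    (hy : 0 ≤ y) (hy' : 0 ≤ y') : IsComparable (c * d) (x * x') (y * y') := by
  constructor
  · calc (c * d)⁻¹ * (y * y') = (c⁻¹ * y) * (d⁻¹ * y') := by rw [mul_inv]; ring
      _ ≤ x * x' := mul_le_mul h.1 h'.1 (by positivity) (h.nonneg hc hy)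
  · calc x * x' ≤ (c * y) * (d * y') := mul_le_mul h.2 h'.2 (h'.nonneg hd hy') (by positivity)
      _ = c * d * (y * y') := by ring

lemma inv (h : IsComparable c x y) (hc : 0 < c) (hy : 0 < y) : IsComparable c x⁻¹ y⁻¹ := by
  have hx := h.pos hc hy
  constructor
  · calc c⁻¹ * y⁻¹ = (c * y)⁻¹ := (mul_inv c y).symm
      _ ≤ x⁻¹ := inv_anti₀ hx h.2
  · calc x⁻¹ ≤ (c⁻¹ * y)⁻¹ := inv_anti₀ (by positivity) h.1
      _ = c * y⁻¹ := by rw [mul_inv, inv_inv]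

lemma div (h : IsComparable c x y) (h' : IsComparable d x' y') (hc : 0 < c) (hd : 0 < d)
    (hy : 0 ≤ y) (hy' : 0 < y') : IsComparable (c * d) (x / x') (y / y') := by
  simpa only [div_eq_mul_inv] using h.mul (h'.inv hd hy') hc hd hy (inv_nonneg.2 hy'.le)

lemma rpow_le_of_nonneg (h : IsComparable c x y) (hc : 0 < c) (hy : 0 ≤ y) {r : ℝ}
    (hr : 0 ≤ r) : x ^ r ≤ c ^ r * y ^ r := by
  rw [← mul_rpow hc.le hy]
  exact rpow_le_rpow (h.nonneg hc hy) h.2 hr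

lemma rpow_le (h : IsComparable c x y) (hc : 0 < c) (hy : 0 < y) (r : ℝ) :
    x ^ r ≤ c ^ |r| * y ^ r := by
  rcases le_or_gt 0 r with hr | hr
  · rw [abs_of_nonneg hr]
    exact h.rpow_le_of_nonneg hc hy.le hr
  · have hx := h.pos hc hy
    have key := (h.inv hc hy).rpow_le_of_nonneg hc (inv_nonneg.2 hy.le) (neg_nonneg.2 hr.le)
    rw [abs_of_neg hr]
    rwa [inv_rpow hx.le, inv_rpow hy.le, ← rpow_neg hx.le, ← rpow_neg hy.le, neg_neg] at key

end IsComparable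

lemma sq_rpow_mul_rpow_eq {P Q R : ℝ} (hP : 0 ≤ P) (hQ : 0 ≤ Q) (hR : 0 ≤ R) (ε a : ℝ) :
    (P ^ (-ε) / Q ^ ((1 : ℝ) / 2) * R ^ (a / 2 + 1 / 4)) ^ 2
      = P ^ (-2 * ε) * Q ^ (-1 : ℝ) * R ^ (a + 1 / 2) := by
  have hsq : ∀ {B : ℝ}, 0 ≤ B → ∀ e : ℝ, (B ^ e) ^ 2 = B ^ (2 * e) := fun hB e => by
    rw [← rpow_mul_natCast hB, mul_comm]; norm_num
  rw [mul_pow, div_pow, hsq hP, hsq hQ, hsq hR, div_eq_mul_inv, ← rpow_neg hQ]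
  ring_nf

lemma rpow_mul_sqrt_mul_div_eq {s t : ℝ} (hs : 0 < s) (ht : 0 < t) (ε a : ℝ) :
    (s * t) ^ (-2 * ε) * (√s * √t) ^ (-1 : ℝ) * (s / t) ^ (a + 1 / 2)
      = s ^ (a - 2 * ε) * t ^ (-(a + 1) - 2 * ε) := by
  rw [mul_rpow hs.le ht.le, mul_rpow (sqrt_nonneg s) (sqrt_nonneg t), div_rpow hs.le ht.le,
    sqrt_eq_rpow, sqrt_eq_rpow, ← rpow_mul hs.le, ← rpow_mul ht.le]
  have hs' : s ^ (a - 2 * ε) = s ^ (-2 * ε) * s ^ (1 / 2 * -1 : ℝ) * s ^ (a + 1 / 2) := by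
    rw [← rpow_add hs, ← rpow_add hs]; ring_nf
  have ht' : t ^ (-(a + 1) - 2 * ε) = t ^ (-2 * ε) * t ^ (1 / 2 * -1 : ℝ) / t ^ (a + 1 / 2) := by
    rw [← rpow_add ht, ← rpow_sub ht]; ring_nf
  rw [hs', ht']
  field_simp

lemma lintegral_Ioc_zero_rpow {p : ℝ} (hp : -1 < p) {t : ℝ} (ht : 0 ≤ t) :
    ∫⁻ s in Ioc 0 t, ENNReal.ofReal (s ^ p) = ENNReal.ofReal (t ^ (p + 1) / (p + 1)) := by
  have hint : IntegrableOn (fun s : ℝ => s ^ p) (Ioc 0 t) :=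
    (intervalIntegrable_iff_integrableOn_Ioc_of_le ht).1
      (intervalIntegral.intervalIntegrable_rpow' hp)
  rw [← ofReal_integral_eq_lintegral_ofReal hint, ← intervalIntegral.integral_of_le ht,
    integral_rpow (Or.inl hp), zero_rpow (by linarith), sub_zero]
  filter_upwards [ae_restrict_mem measurableSet_Ioc] with s hs
  exact rpow_nonneg hs.1.le _

lemma lintegral_triangle_rpow_mul_rpow_lt_top {p q : ℝ} (hp : -1 < p) (hpq : -1 < p + q + 1) :
    ∫⁻ t in Ioc 0 1, ∫⁻ s in Ioc 0 t, ENNReal.ofReal (s ^ p * t ^ q) < ⊤ := by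
  have hinner : EqOn (fun t => ∫⁻ s in Ioc 0 t, ENNReal.ofReal (s ^ p * t ^ q))
      (fun t => ENNReal.ofReal (1 / (p + 1)) * ENNReal.ofReal (t ^ (p + q + 1))) (Ioc 0 1) := by
    intro t ht
    have ht0 : 0 < t := ht.1
    have hp1 : 0 < p + 1 := by linarith
    have htq : 0 ≤ t ^ q := rpow_nonneg ht0.le q
    simp_rw [ENNReal.ofReal_mul' htq]
    rw [lintegral_mul_const' _ _ ENNReal.ofReal_ne_top, lintegral_Ioc_zero_rpow hp ht0.le,
      ← ENNReal.ofReal_mul (by positivity), ← ENNReal.ofReal_mul (by positivity),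
      show p + q + 1 = (p + 1) + q by ring, rpow_add ht0 (p + 1) q]
    congr 1
    ring
  rw [setLIntegral_congr_fun measurableSet_Ioc hinner,
    lintegral_const_mul' _ _ ENNReal.ofReal_ne_top, lintegral_Ioc_zero_rpow hpq zero_le_one]
  exact ENNReal.mul_lt_top ENNReal.ofReal_lt_top ENNReal.ofReal_lt_top

lemma kernel_sq_le {c s t x y u v : ℝ} (hc : 0 < c) (hs : 0 < s) (ht : 0 < t)
    (hx : IsComparable c x s) (hy : IsComparable c y t)
    (hu : IsComparable c u √s) (hv : IsComparable c v √t) (ε a : ℝ) :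
    ((x * y) ^ (-ε) / (u * v) ^ ((1 : ℝ) / 2) * (x / y) ^ (a / 2 + 1 / 4)) ^ 2
      ≤ (c * c) ^ |-2 * ε| * (c * c) ^ |(-1 : ℝ)| * (c * c) ^ |a + 1 / 2|
        * (s ^ (a - 2 * ε) * t ^ (-(a + 1) - 2 * ε)) := by
  have hcc : 0 < c * c := mul_pos hc hc
  have hst : 0 < s * t := mul_pos hs ht
  have hxy := hx.mul hy hc hc hs.le ht.le
  have huv := hu.mul hv hc hc (sqrt_nonneg s) (sqrt_nonneg t)
  have hx_y := hx.div hy hc hc hs.le ht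
  have huv0 := huv.nonneg hcc (by positivity)
  have hx_y0 := hx_y.nonneg hcc (by positivity)
  rw [sq_rpow_mul_rpow_eq (hxy.nonneg hcc hst.le) huv0 hx_y0, ← rpow_mul_sqrt_mul_div_eq hs ht]
  calc (x * y) ^ (-2 * ε) * (u * v) ^ (-1 : ℝ) * (x / y) ^ (a + 1 / 2)
      ≤ ((c * c) ^ |-2 * ε| * (s * t) ^ (-2 * ε))
          * ((c * c) ^ |(-1 : ℝ)| * (√s * √t) ^ (-1 : ℝ))
          * ((c * c) ^ |a + 1 / 2| * (s / t) ^ (a + 1 / 2)) := by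
        refine mul_le_mul (mul_le_mul (hxy.rpow_le hcc hst _) (huv.rpow_le hcc ?_ _)
          (rpow_nonneg huv0 _) ?_) (hx_y.rpow_le hcc ?_ _) (rpow_nonneg hx_y0 _) ?_ <;> positivity
    _ = _ := by ring

theorem stmt_14_general (a : ℝ) (ε : ℝ)
    (hε : 0 < ε ∧ ε < min (1 / 4) ((a + 1) / 2))
    (φ θ : ℝ → ℝ) (c : ℝ) (hc : 1 ≤ c)
    (hφ : ∀ t ∈ Set.Ioc (0 : ℝ) 1, c⁻¹ * Real.sqrt t ≤ φ t ∧ φ t ≤ c * Real.sqrt t)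
    (hθ : ∀ t ∈ Set.Ioc (0 : ℝ) 1, c⁻¹ * t ≤ θ t ∧ θ t ≤ c * t)
    (Kε : ℝ → ℝ → ℝ)
    (hKε : Kε = fun s t =>
      (θ s * θ t) ^ (-ε) / (φ s * φ t) ^ ((1 : ℝ) / 2) * (θ s / θ t) ^ (a / 2 + 1 / 4)) :
    (∫⁻ t in Set.Ioc (0 : ℝ) 1, ∫⁻ s in Set.Ioc (0 : ℝ) t,
      ENNReal.ofReal ((Kε s t) ^ 2)) < ⊤ := by
  obtain ⟨-, hε4, hεa⟩ : 0 < ε ∧ ε < 1 / 4 ∧ ε < (a + 1) / 2 := by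
    simpa only [lt_min_iff] using hε
  have hc0 : 0 < c := one_pos.trans_le hc
  set C := (c * c) ^ |-2 * ε| * (c * c) ^ |(-1 : ℝ)| * (c * c) ^ |a + 1 / 2|
  have hbound : ∀ t ∈ Ioc (0 : ℝ) 1, ∀ s ∈ Ioc 0 t, ENNReal.ofReal (Kε s t ^ 2)
      ≤ ENNReal.ofReal C * ENNReal.ofReal (s ^ (a - 2 * ε) * t ^ (-(a + 1) - 2 * ε)) := by
    intro t ht s hs
    have hs1 : s ∈ Ioc (0 : ℝ) 1 := ⟨hs.1, hs.2.trans ht.2⟩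
    rw [← ENNReal.ofReal_mul (by positivity), hKε]
    exact ENNReal.ofReal_le_ofReal <| kernel_sq_le hc0 hs.1 ht.1 (hθ s hs1) (hθ t ht)
      (hφ s hs1) (hφ t ht) ε a
  calc _ ≤ ∫⁻ t in Ioc 0 1, ∫⁻ s in Ioc 0 t,
          ENNReal.ofReal C * ENNReal.ofReal (s ^ (a - 2 * ε) * t ^ (-(a + 1) - 2 * ε)) :=
        setLIntegral_mono' measurableSet_Ioc fun t ht =>
          setLIntegral_mono' measurableSet_Ioc (hbound t ht)
    _ = ENNReal.ofReal C * ∫⁻ t in Ioc 0 1, ∫⁻ s in Ioc 0 t,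
          ENNReal.ofReal (s ^ (a - 2 * ε) * t ^ (-(a + 1) - 2 * ε)) := by
        simp_rw [lintegral_const_mul' _ _ ENNReal.ofReal_ne_top]
    _ < ⊤ := ENNReal.mul_lt_top ENNReal.ofReal_lt_top
        (lintegral_triangle_rpow_mul_rpow_lt_top (by linarith) (by linarith))

theorem stmt_14 (a : ℝ) (ha : -1 < a) (ε : ℝ)
    (hε : 0 < ε ∧ ε < min (1 / 4) ((a + 1) / 2))
    (φ θ : ℝ → ℝ) (c : ℝ) (hc : 1 ≤ c)
    (hφ : ∀ t ∈ Set.Ioc (0 : ℝ) 1, c⁻¹ * Real.sqrt t ≤ φ t ∧ φ t ≤ c * Real.sqrt t)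
    (hθ : ∀ t ∈ Set.Ioc (0 : ℝ) 1, c⁻¹ * t ≤ θ t ∧ θ t ≤ c * t)
    (Kε : ℝ → ℝ → ℝ)
    (hKε : Kε = fun s t =>
      (θ s * θ t) ^ (-ε) / (φ s * φ t) ^ ((1 : ℝ) / 2) * (θ s / θ t) ^ (a / 2 + 1 / 4)) :
    (∫⁻ t in Set.Ioc (0 : ℝ) 1, ∫⁻ s in Set.Ioc (0 : ℝ) t,
      ENNReal.ofReal ((Kε s t) ^ 2)) < ⊤ :=
  stmt_14_general a ε hε φ θ c hc hφ hθ Kε hKε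
end
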